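/- In a residuated lattice A, the following are equivalent: (1) every proper α-filter F satisfies F^⊥ ≠ {1}; (2) every filter F with F^⊥ = {1} contains a dense element; (3) every α-filter F satisfies F = F^⊥⊥. Moreover, each of these conditions implies that A is quasicomplemented. -/

import Mathlib

/-!
For a filter `F`, the union of the `f^⊥⊥` over `f ∈ F` is the α-filter it generates. It has the
same coannihilator as `F`, and it is all of `A` exactly when `F` contains a dense element
(`⊥ ∈ f^⊥⊥` says precisely that `f` is dense). This gives (1) ⇒ (2), (2) ⇒ (1) and (3) ⇒ (2)
at once.

(2) ⇒ (3) and quasicomplementedness come from applying (2) to the join of two filters whose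
coannihilators meet in `{1}`: a dense `d ≥ a * b` in it forces every `u` with `u ⊔ a = 1` and
`u ⊔ b = 1` to be `1`, because `(a * b)^⊥ = a^⊥ ∩ b^⊥`.
-/

/-- A (bounded, integral, commutative) residuated lattice. -/
class ResLattice (A : Type*) extends Lattice A, CommMonoid A, OrderBot A where
  himp : A → A → A
  adjunction : ∀ x y z : A, x * y ≤ z ↔ x ≤ himp y z
  le_one : ∀ x : A, x ≤ 1

variable {A : Type*} [ResLattice A]

/-- Coannihilator of a subset: `X^⊥ = {a | a ⊔ x = 1 for all x ∈ X}`. -/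
def Coann (X : Set A) : Set A := {a | ∀ x ∈ X, a ⊔ x = 1}

/-- Coannulet of an element: `x^⊥`. -/
def rperp (x : A) : Set A := Coann {x}

/-- The principal filter generated by `x`. -/
def PFil (x : A) : Set A := {a | ∃ n : ℕ, 0 < n ∧ x ^ n ≤ a}

/-- Filters of a residuated lattice. -/
def IsRLFilter (F : Set A) : Prop :=
  F.Nonempty ∧ (∀ x ∈ F, ∀ y ∈ F, x * y ∈ F) ∧ (∀ x ∈ F, ∀ y : A, x ⊔ y ∈ F)

/-- Prime filters. -/
def IsRLPrime (P : Set A) : Prop :=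
  IsRLFilter P ∧ P ≠ Set.univ ∧ ∀ x y : A, x ⊔ y ∈ P → x ∈ P ∨ y ∈ P

/-- Minimal prime filters. -/
def IsRLMinPrime (P : Set A) : Prop :=
  IsRLPrime P ∧ ∀ Q : Set A, IsRLPrime Q → Q ⊆ P → Q = P

/-- Quasicomplemented residuated lattice. -/
def Quasicomplemented (A : Type*) [ResLattice A] : Prop :=
  ∀ x : A, ∃ y : A, Coann (rperp x) = rperp y

/-- α-filters. -/
def IsAlphaFilter (F : Set A) : Prop :=
  IsRLFilter F ∧ ∀ x ∈ F, Coann (rperp x) ⊆ F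

/-- The α-filter generated by a subset. -/
def alphaGen (X : Set A) : Set A := ⋂₀ {G : Set A | IsAlphaFilter G ∧ X ⊆ G}

namespace ResLattice

instance : IsOrderedMonoid A where
  mul_le_mul_left a b h c := (adjunction a c (b * c)).mpr (h.trans ((adjunction b c _).mp le_rfl))

protected lemma eq_one_of_one_le {a : A} (h : 1 ≤ a) : a = 1 := (le_one a).antisymm h

lemma sup_mul_le {x y z t : A} (hx : x * z ≤ t) (hy : y * z ≤ t) : (x ⊔ y) * z ≤ t :=
  (adjunction _ z t).mpr (sup_le ((adjunction x z t).mp hx) ((adjunction y z t).mp hy))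

lemma mul_sup_eq_one {a b c : A} (ha : a ⊔ c = 1) (hb : b ⊔ c = 1) : a * b ⊔ c = 1 := by
  refine ResLattice.eq_one_of_one_le ?_
  have hac : a * (b ⊔ c) ≤ a * b ⊔ c := by
    rw [mul_comm]
    exact sup_mul_le (by rw [mul_comm]; exact le_sup_left)
      ((mul_le_of_le_one_right' (le_one a)).trans le_sup_right)
  calc (1 : A) = (a ⊔ c) * (b ⊔ c) := by rw [ha, hb, one_mul]
    _ ≤ a * b ⊔ c := sup_mul_le hac ((mul_le_of_le_one_right' (le_one _)).trans le_sup_right)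

end ResLattice

open ResLattice

lemma mem_rperp {x a : A} : a ∈ rperp x ↔ a ⊔ x = 1 := by
  simp [rperp, Coann]

lemma one_mem_coann (X : Set A) : (1 : A) ∈ Coann X :=
  fun x _ => sup_eq_left.mpr (le_one x)

lemma coann_eq_singleton_one_iff {X : Set A} : Coann X = {1} ↔ Coann X ⊆ {1} :=
  ⟨Eq.subset, fun h => h.antisymm (Set.singleton_subset_iff.mpr (one_mem_coann X))⟩

lemma coann_anti {X Y : Set A} (h : X ⊆ Y) : Coann Y ⊆ Coann X :=
  fun _ ha x hx => ha x (h hx)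

lemma subset_coann_coann (X : Set A) : X ⊆ Coann (Coann X) :=
  fun x hx a ha => by rw [sup_comm]; exact ha x hx

lemma coann_singleton_one : Coann ({1} : Set A) = Set.univ :=
  Set.eq_univ_of_forall fun a => by simpa [Coann] using le_one a

lemma coann_inter_coann_coann (X : Set A) : Coann X ∩ Coann (Coann X) = {1} := by
  refine Set.Subset.antisymm (fun z ⟨hz, hzz⟩ => ?_) (by simp [one_mem_coann])
  simpa using hzz z hz

lemma isRLFilter_coann (X : Set A) : IsRLFilter (Coann X) :=
  ⟨⟨1, one_mem_coann X⟩, fun _ ha _ hb x hx => mul_sup_eq_one (ha x hx) (hb x hx),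
    fun _ ha _ x hx => ResLattice.eq_one_of_one_le <| (ha x hx).ge.trans <|
      sup_le_sup_right le_sup_left x⟩

lemma rperp_mul (a b : A) : rperp (a * b) = rperp a ∩ rperp b := by
  ext u
  simp only [Set.mem_inter_iff, mem_rperp]
  refine ⟨fun h => ⟨?_, ?_⟩, fun ⟨ha, hb⟩ => ?_⟩
  · exact ResLattice.eq_one_of_one_le
      (h.ge.trans (sup_le_sup_left (mul_le_of_le_one_right' (le_one b)) u))
  · exact ResLattice.eq_one_of_one_le
      (h.ge.trans (sup_le_sup_left (mul_le_of_le_one_left' (le_one a)) u))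
  · rw [sup_comm] at ha hb ⊢
    exact mul_sup_eq_one ha hb

lemma eq_one_of_sup_eq_one_of_dense {a b d u : A} (hd : rperp d = {1}) (hle : a * b ≤ d)
    (ha : u ⊔ a = 1) (hb : u ⊔ b = 1) : u = 1 := by
  have hu : u ∈ rperp (a * b) := by
    rw [rperp_mul]
    exact ⟨mem_rperp.mpr ha, mem_rperp.mpr hb⟩
  have : u ∈ rperp d := mem_rperp.mpr <|
    ResLattice.eq_one_of_one_le ((mem_rperp.mp hu).ge.trans (sup_le_sup_left hle u))
  rwa [hd] at this

lemma one_mem_of_isRLFilter {F : Set A} (hF : IsRLFilter F) : (1 : A) ∈ F := by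
  obtain ⟨⟨f, hf⟩, -, hsup⟩ := hF
  simpa [sup_eq_right.mpr (le_one f)] using hsup f hf 1

/-- The filter generated by `F ∪ G`, for filters `F` and `G`. -/
def filterSup (F G : Set A) : Set A := {a | ∃ f ∈ F, ∃ g ∈ G, f * g ≤ a}

lemma isRLFilter_filterSup {F G : Set A} (hF : IsRLFilter F) (hG : IsRLFilter G) :
    IsRLFilter (filterSup F G) := by
  refine ⟨⟨1 * 1, 1, one_mem_of_isRLFilter hF, 1, one_mem_of_isRLFilter hG, le_rfl⟩, ?_, ?_⟩
  · rintro a ⟨f, hf, g, hg, hfg⟩ b ⟨f', hf', g', hg', hfg'⟩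
    refine ⟨f * f', hF.2.1 f hf f' hf', g * g', hG.2.1 g hg g' hg', ?_⟩
    calc f * f' * (g * g') = f * g * (f' * g') := mul_mul_mul_comm f f' g g'
      _ ≤ a * b := mul_le_mul' hfg hfg'
  · rintro a ⟨f, hf, g, hg, hfg⟩ y
    exact ⟨f, hf, g, hg, hfg.trans le_sup_left⟩

lemma coann_filterSup_subset {F G : Set A} (hF : IsRLFilter F) (hG : IsRLFilter G) :
    Coann (filterSup F G) ⊆ Coann F ∩ Coann G :=
  Set.subset_inter
    (coann_anti fun f hf => ⟨f, hf, 1, one_mem_of_isRLFilter hG, (mul_one f).le⟩)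
    (coann_anti fun g hg => ⟨1, one_mem_of_isRLFilter hF, g, hg, (one_mul g).le⟩)

/-- The α-filter generated by a filter `F`. -/
def alphaHull (F : Set A) : Set A := {a | ∃ f ∈ F, a ∈ Coann (rperp f)}

lemma subset_alphaHull (F : Set A) : F ⊆ alphaHull F :=
  fun f hf => ⟨f, hf, subset_coann_coann _ rfl⟩

lemma isAlphaFilter_alphaHull {F : Set A} (hF : IsRLFilter F) : IsAlphaFilter (alphaHull F) := by
  refine ⟨⟨⟨1, subset_alphaHull F (one_mem_of_isRLFilter hF)⟩, ?_, ?_⟩, ?_⟩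
  · rintro a ⟨f, hf, ha⟩ b ⟨g, hg, hb⟩
    refine ⟨f * g, hF.2.1 f hf g hg, ?_⟩
    rw [rperp_mul]
    exact (isRLFilter_coann _).2.1 a (coann_anti Set.inter_subset_left ha)
      b (coann_anti Set.inter_subset_right hb)
  · rintro a ⟨f, hf, ha⟩ y
    exact ⟨f, hf, (isRLFilter_coann _).2.2 a ha y⟩
  · rintro a ⟨f, hf, ha⟩ b hb
    exact ⟨f, hf, coann_anti (fun c hc => mem_rperp.mpr (by rw [sup_comm]; exact ha c hc)) hb⟩

lemma coann_alphaHull (F : Set A) : Coann (alphaHull F) = Coann F := by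
  refine (coann_anti (subset_alphaHull F)).antisymm fun c hc a ⟨f, hf, ha⟩ => ?_
  rw [sup_comm]
  exact ha c (mem_rperp.mpr (hc f hf))

lemma alphaHull_eq_univ_iff {F : Set A} :
    alphaHull F = Set.univ ↔ ∃ d ∈ F, rperp d = {1} := by
  constructor
  · intro h
    obtain ⟨d, hd, hbot⟩ : (⊥ : A) ∈ alphaHull F := h ▸ Set.mem_univ ⊥
    refine ⟨d, hd, coann_eq_singleton_one_iff.mpr fun c hc => ?_⟩
    simpa using hbot c hc
  · rintro ⟨d, hd, hdense⟩
    exact Set.eq_univ_of_forall fun a =>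
      ⟨d, hd, by rw [hdense, coann_singleton_one]; exact Set.mem_univ a⟩

lemma exists_dense_mem_of_coann_ne_one
    (h : ∀ F : Set A, IsAlphaFilter F → F ≠ Set.univ → Coann F ≠ {1})
    {F : Set A} (hF : IsRLFilter F) (hFd : Coann F = {1}) : ∃ d ∈ F, rperp d = {1} := by
  refine alphaHull_eq_univ_iff.mp (not_not.mp fun hne => ?_)
  exact h _ (isAlphaFilter_alphaHull hF) hne (by rw [coann_alphaHull, hFd])

lemma coann_ne_one_of_exists_dense_mem
    (h : ∀ F : Set A, IsRLFilter F → Coann F = {1} → ∃ d ∈ F, rperp d = {1})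
    {F : Set A} (hF : IsAlphaFilter F) (hne : F ≠ Set.univ) : Coann F ≠ {1} := by
  intro hFd
  obtain ⟨d, hd, hdense⟩ := h F hF.1 hFd
  have := hF.2 d hd
  rw [hdense, coann_singleton_one] at this
  exact hne (Set.univ_subset_iff.mp this)

lemma exists_dense_mem_of_eq_coann_coann
    (h : ∀ F : Set A, IsAlphaFilter F → F = Coann (Coann F))
    {F : Set A} (hF : IsRLFilter F) (hFd : Coann F = {1}) : ∃ d ∈ F, rperp d = {1} := by
  have hH := h _ (isAlphaFilter_alphaHull hF)
  rw [coann_alphaHull, hFd, coann_singleton_one] at hH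
  exact alphaHull_eq_univ_iff.mp hH

/-- For `x ∈ F^⊥⊥`, the filter generated by `F ∪ x^⊥` has trivial coannihilator; a dense element
`d ≥ f * y` of it (`f ∈ F`, `y ∈ x^⊥`) puts `x` into `(f ⊔ x)^⊥⊥ ⊆ F`. -/
lemma eq_coann_coann_of_exists_dense_mem
    (h : ∀ F : Set A, IsRLFilter F → Coann F = {1} → ∃ d ∈ F, rperp d = {1})
    {F : Set A} (hF : IsAlphaFilter F) : F = Coann (Coann F) := by
  refine (subset_coann_coann F).antisymm fun x hx => ?_
  have hG : Coann (filterSup F (rperp x)) = {1} := by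
    refine coann_eq_singleton_one_iff.mpr fun c hc => ?_
    obtain ⟨hcF, hcx⟩ := coann_filterSup_subset hF.1 (isRLFilter_coann {x}) hc
    rw [← coann_inter_coann_coann {x}]
    exact ⟨mem_rperp.mpr (by rw [sup_comm]; exact hx c hcF), hcx⟩
  obtain ⟨d, ⟨f, hf, y, hy, hle⟩, hdense⟩ :=
    h _ (isRLFilter_filterSup hF.1 (isRLFilter_coann {x})) hG
  refine hF.2 (f ⊔ x) (hF.1.2.2 f hf x) fun c hc => ?_
  have hc : c ⊔ (f ⊔ x) = 1 := mem_rperp.mp hc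
  refine eq_one_of_sup_eq_one_of_dense hdense hle ?_ ?_
  · rw [← hc]; ac_rfl
  · exact ResLattice.eq_one_of_one_le ((mem_rperp.mp hy).ge.trans
      (sup_le le_sup_right (le_sup_of_le_left le_sup_left)))

/-- A dense element `d ≥ b * c` of the filter generated by `x^⊥ ∪ x^⊥⊥` (`b ∈ x^⊥`,
`c ∈ x^⊥⊥`) gives `x^⊥⊥ = b^⊥`. -/
lemma quasicomplemented_of_exists_dense_mem
    (h : ∀ F : Set A, IsRLFilter F → Coann F = {1} → ∃ d ∈ F, rperp d = {1}) :
    Quasicomplemented A := by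
  intro x
  have hG : Coann (filterSup (rperp x) (Coann (rperp x))) = {1} := by
    refine coann_eq_singleton_one_iff.mpr ?_
    rw [← coann_inter_coann_coann (rperp x)]
    exact coann_filterSup_subset (isRLFilter_coann {x}) (isRLFilter_coann _)
  obtain ⟨d, ⟨b, hb, c, hc, hle⟩, hdense⟩ :=
    h _ (isRLFilter_filterSup (isRLFilter_coann {x}) (isRLFilter_coann _)) hG
  refine ⟨b, Set.Subset.antisymm (fun w hw => mem_rperp.mpr (hw b hb)) fun w hw z hz => ?_⟩
  refine eq_one_of_sup_eq_one_of_dense hdense hle ?_ ?_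
  · exact ResLattice.eq_one_of_one_le
      ((mem_rperp.mp hw).ge.trans (sup_le_sup_right le_sup_left b))
  · exact ResLattice.eq_one_of_one_le ((hc z hz).ge.trans
      (sup_le le_sup_right (le_sup_of_le_left le_sup_right)))

theorem stmt17 :
    (((∀ F : Set A, IsAlphaFilter F → F ≠ Set.univ → Coann F ≠ {1}) ↔
       (∀ F : Set A, IsRLFilter F → Coann F = {1} → ∃ d ∈ F, rperp d = {1})) ∧
     ((∀ F : Set A, IsRLFilter F → Coann F = {1} → ∃ d ∈ F, rperp d = {1}) ↔
       (∀ F : Set A, IsAlphaFilter F → F = Coann (Coann F)))) ∧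
    ((∀ F : Set A, IsAlphaFilter F → F ≠ Set.univ → Coann F ≠ {1}) →
      Quasicomplemented A) :=
  ⟨⟨⟨fun h _ => exists_dense_mem_of_coann_ne_one h,
        fun h _ => coann_ne_one_of_exists_dense_mem h⟩,
      ⟨fun h _ => eq_coann_coann_of_exists_dense_mem h,
        fun h _ => exists_dense_mem_of_eq_coann_coann h⟩⟩,
    fun h => quasicomplemented_of_exists_dense_mem fun _ => exists_dense_mem_of_coann_ne_one h⟩
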